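/- arXiv:2406.11740 — 2 statements merged into one kernel-verified Lean document; each statement's English description precedes it below -/
import Mathlib

section
/- Proposition 1 (bi-equivariance of the place policy). Let E = EuclideanSpace ℝ (Fin 3) and fix n m : ℕ. Let f_gen : (Fin n → E) × (Fin m → E) → (Fin n → E) × (Fin m → E) be a generation map that is rotation-invariant in each argument: for all rotations g_a, g_b of E and all point clouds P_a : Fin n → E, P_b : Fin m → E, f_gen(g_a ∘ P_a, g_b ∘ P_b) = f_gen(P_a, P_b). Write (P̂_a, P̂_b) = f_gen(P_a, P_b). Suppose T_a is a best-fit rigid motion for (P_a, P̂_a) and T_b is a best-fit rigid motion for (P_b, P̂_b). Then for all rotations g_a, g_b of E: (i) the generated clouds for the rotated input (g_a ∘ P_a, g_b ∘ P_b) are again (P̂_a, P̂_b); (ii) T_a ∘ g_a⁻¹ is a best-fit rigid motion for (g_a ∘ P_a, P̂_a), and T_b ∘ g_b⁻¹ is a best-fit rigid motion for (g_b ∘ P_b, P̂_b); (iii) the resulting place action satisfies (T_a ∘ g_a⁻¹)⁻¹ ∘ (T_b ∘ g_b⁻¹) = g_a ∘ (T_a⁻¹ ∘ T_b) ∘ g_b⁻¹,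 i.e. the place action is bi-equivariant: a'_place = g_a ∘ a_place ∘ g_b⁻¹ where a_place = T_a⁻¹ ∘ T_b. -/
open scoped BigOperators

noncomputable section

/-- The Euclidean space `ℝ³`. -/
abbrev E : Type := EuclideanSpace ℝ (Fin 3)

/-- The registration cost of a rigid motion `T` for point clouds `P, Q`. -/
def regCost {k : ℕ} (P Q : Fin k → E) (T : E ≃ᵃⁱ[ℝ] E) : ℝ :=
  ∑ i : Fin k, ‖T (P i) - Q i‖ ^ 2

/-- `T` is a best-fit rigid motion for `(P, Q)`. -/
def IsBestFit {k : ℕ} (P Q : Fin k → E) (T : E ≃ᵃⁱ[ℝ] E) : Prop :=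
  ∀ T' : E ≃ᵃⁱ[ℝ] E, regCost P Q T ≤ regCost P Q T'

/-- A rotation of `E`: a linear isometry equivalence of determinant 1 (an element of SO(3)). -/
def IsRotation (g : E ≃ₗᵢ[ℝ] E) : Prop :=
  LinearMap.det (g.toLinearEquiv : E →ₗ[ℝ] E) = 1

lemma regCost_precomp {k : ℕ} (P Q : Fin k → E) (g : E ≃ᵃⁱ[ℝ] E) (T : E ≃ᵃⁱ[ℝ] E) :
    regCost (fun i => g (P i)) Q (g.symm.trans T) = regCost P Q T := by
  unfold regCost
  simp [AffineIsometryEquiv.coe_trans, Function.comp]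

lemma isBestFit_precomp {k : ℕ} (P Q : Fin k → E) (g : E ≃ᵃⁱ[ℝ] E) (T : E ≃ᵃⁱ[ℝ] E)
    (h : IsBestFit P Q T) : IsBestFit (fun i => g (P i)) Q (g.symm.trans T) := by
  intro T'
  rw [regCost_precomp]
  have := h (g.trans T')
  refine this.trans (le_of_eq ?_)
  unfold regCost
  simp [AffineIsometryEquiv.coe_trans, Function.comp]

/-- **Proposition 1 (bi-equivariance of the place policy).**
If the generation map `f_gen` is rotation-invariant in each argument, then
(i) the generated clouds for rotated inputs are unchanged,
(ii) the best-fit transforms for the rotated inputs are `T_a ∘ g_a⁻¹` and `T_b ∘ g_b⁻¹`, and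
(iii) the resulting place action is bi-equivariant:
`(T_a ∘ g_a⁻¹)⁻¹ ∘ (T_b ∘ g_b⁻¹) = g_a ∘ (T_a⁻¹ ∘ T_b) ∘ g_b⁻¹`. -/
theorem place_policy_biequivariant {n m : ℕ}
    (fgen : (Fin n → E) × (Fin m → E) → (Fin n → E) × (Fin m → E))
    (hinv : ∀ (ga gb : E ≃ₗᵢ[ℝ] E), IsRotation ga → IsRotation gb →
      ∀ (Pa : Fin n → E) (Pb : Fin m → E),
        fgen (fun i => ga (Pa i), fun j => gb (Pb j)) = fgen (Pa, Pb))
    (Pa : Fin n → E) (Pb : Fin m → E)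
    (Ta Tb : E ≃ᵃⁱ[ℝ] E)
    (hTa : IsBestFit Pa (fgen (Pa, Pb)).1 Ta)
    (hTb : IsBestFit Pb (fgen (Pa, Pb)).2 Tb) :
    ∀ (ga gb : E ≃ₗᵢ[ℝ] E), IsRotation ga → IsRotation gb →
      fgen (fun i => ga (Pa i), fun j => gb (Pb j)) = fgen (Pa, Pb) ∧
      IsBestFit (fun i => ga (Pa i)) (fgen (Pa, Pb)).1
        (ga.toAffineIsometryEquiv.symm.trans Ta) ∧
      IsBestFit (fun j => gb (Pb j)) (fgen (Pa, Pb)).2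
        (gb.toAffineIsometryEquiv.symm.trans Tb) ∧
      (gb.toAffineIsometryEquiv.symm.trans Tb).trans
          (ga.toAffineIsometryEquiv.symm.trans Ta).symm =
        (gb.toAffineIsometryEquiv.symm.trans (Tb.trans Ta.symm)).trans
          ga.toAffineIsometryEquiv := by
  intro ga gb hga hgb
  refine ⟨hinv ga gb hga hgb Pa Pb, ?_, ?_, ?_⟩
  · exact isBestFit_precomp _ _ _ _ hTa
  · exact isBestFit_precomp _ _ _ _ hTb
  · ext x
    simp [AffineIsometryEquiv.coe_trans, Function.comp]

end
end

section
/- Proposition 2 (equivariance of the pick policy). Let E = EuclideanSpace ℝ (Fin 3) and fix n m : ℕ. Let P_a : Fin n → E be a fixed (gripper) point cloud and let f_gen : (Fin m → E) → (Fin m → E) be a generation map that is rotation-invariant: for every rotation g of E and every point cloud P_b : Fin m → E, f_gen(g ∘ P_b) = f_gen(P_b). Write P̂_b = f_gen(P_b), and suppose T_b is a best-fit rigid motion for (P_b, P̂_b). Then for every rotation g of E: (i) the generated cloud for the rotated input g ∘ P_b is again P̂_b; (ii) T_b ∘ g⁻¹ is a best-fit rigid motion for (g ∘ P_b, P̂_b);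 (iii) the resulting pick action satisfies (T_b ∘ g⁻¹)⁻¹ = g ∘ T_b⁻¹, i.e. the pick action is rotation-equivariant: a'_pick = g ∘ a_pick where a_pick = T_b⁻¹. -/
open scoped BigOperators

noncomputable section

/-- **Proposition 2 (equivariance of the pick policy).**
If the generation map `f_gen` (conditioned on a fixed gripper cloud `P_a`) is
rotation-invariant, then for every rotation `g`:
(i) the generated cloud for the rotated input `g ∘ P_b` is again `P̂_b`,
(ii) `T_b ∘ g⁻¹` is a best-fit rigid motion for `(g ∘ P_b, P̂_b)`, and
(iii) the pick action is rotation-equivariant: `(T_b ∘ g⁻¹)⁻¹ = g ∘ T_b⁻¹`. -/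
theorem pick_policy_equivariant {n m : ℕ} (Pa : Fin n → E)
    (fgen : (Fin m → E) → (Fin m → E))
    (hinv : ∀ (g : E ≃ₗᵢ[ℝ] E), IsRotation g →
      ∀ Pb : Fin m → E, fgen (fun j => g (Pb j)) = fgen Pb)
    (Pb : Fin m → E) (Tb : E ≃ᵃⁱ[ℝ] E)
    (hTb : IsBestFit Pb (fgen Pb) Tb) :
    ∀ (g : E ≃ₗᵢ[ℝ] E), IsRotation g →
      -- (i) the generated cloud for the rotated input is again `P̂_b`
      fgen (fun j => g (Pb j)) = fgen Pb ∧
      -- (ii) `T_b ∘ g⁻¹` is a best fit for `(g ∘ P_b, P̂_b)`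
      IsBestFit (fun j => g (Pb j)) (fgen Pb)
        (g.toAffineIsometryEquiv.symm.trans Tb) ∧
      -- (iii) the pick action is rotation-equivariant: `(T_b ∘ g⁻¹)⁻¹ = g ∘ T_b⁻¹`
      (g.toAffineIsometryEquiv.symm.trans Tb).symm =
        Tb.symm.trans g.toAffineIsometryEquiv := by
  intro g hg
  refine ⟨hinv g hg Pb, ?_, ?_⟩
  · intro T'
    have key : ∀ T : E ≃ᵃⁱ[ℝ] E,
        regCost (fun j => g (Pb j)) (fgen Pb) T
          = regCost Pb (fgen Pb) (g.toAffineIsometryEquiv.trans T) := by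
      intro T
      simp [regCost, AffineIsometryEquiv.coe_trans, Function.comp]
    rw [key, key]
    have h1 : g.toAffineIsometryEquiv.trans (g.toAffineIsometryEquiv.symm.trans Tb) = Tb := by
      refine AffineIsometryEquiv.ext fun x => ?_
      show Tb (g.toAffineIsometryEquiv.symm (g.toAffineIsometryEquiv x)) = Tb x
      rw [AffineIsometryEquiv.symm_apply_apply]
    rw [h1]
    exact hTb _
  · refine AffineIsometryEquiv.ext fun x => ?_
    show (g.toAffineIsometryEquiv.symm.trans Tb).symm x = g.toAffineIsometryEquiv (Tb.symm x)
    rw [AffineIsometryEquiv.coe_symm_trans]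
    simp

end
end
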